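/- arXiv:1712.03708 — 2 statements merged into one kernel-verified Lean document; each statement's English description precedes it below -/
import Mathlib

section
/- Let L be a field of characteristic 0 such that for every positive integer n there exists a primitive n-th root of unity in L. Then the absolute Galois group of L is torsion-free: every field automorphism σ of an algebraic closure L̄ of L fixing L pointwise and satisfying σ^n = id for some integer n ≥ 1 is the identity. -/
/-!
An automorphism `σ ≠ 1` of finite order `p` of `L̄/L` has minimal polynomial `X ^ p - 1` as an
`L`-linear map, so it has an eigenvector `v` for a primitive `p`-th root of unity `ζ ∈ L`.
Write `v = b ^ p` and `c = σ b / b`. Then `c ^ p = ζ`, so `c` is a `p²`-th root of unity; these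
all lie in `L`, so `σ` fixes `c` and `σ ^ p b = c ^ p b = ζ b`, contradicting `σ ^ p = 1`.
-/

open Polynomial

theorem Module.End.hasEigenvalue_of_isRoot_of_isIntegral {R M : Type*} [CommRing R] [IsDomain R]
    [AddCommGroup M] [Module R M] {f : End R M} (hf : IsIntegral R f) {μ : R}
    (h : (minpoly R f).IsRoot μ) : f.HasEigenvalue μ := by
  obtain ⟨q, hq⟩ := dvd_iff_isRoot.mpr h
  have hq0 : q ≠ 0 := by
    rintro rfl
    exact minpoly.ne_zero hf (by rw [hq, mul_zero])
  obtain ⟨v, hv⟩ : ∃ v : M, q.aeval f v ≠ 0 := by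
    by_contra! hzero
    have := minpoly.min R f ((monic_X_sub_C μ).of_mul_monic_left (hq ▸ minpoly.monic hf))
      (LinearMap.ext hzero)
    rw [hq, degree_mul, degree_X_sub_C, degree_eq_natDegree hq0] at this
    norm_cast at this
    omega
  refine hasEigenvalue_of_hasEigenvector (hasEigenvector_iff.mpr ⟨?_, hv⟩)
  simpa [sub_eq_zero, hq] using congr($(minpoly.aeval R f) v)

theorem AlgEquiv.hasEigenvalue_of_pow_orderOf_eq_one {K L : Type*} [Field K] [CommRing L]
    [IsDomain L] [Algebra K L] (σ : L ≃ₐ[K] L) (hσ : IsOfFinOrder σ) {ζ : K}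
    (hζ : ζ ^ orderOf σ = 1) : Module.End.HasEigenvalue σ.toLinearMap ζ := by
  have hmin := minpoly_algEquiv_toLinearMap σ hσ
  refine Module.End.hasEigenvalue_of_isRoot_of_isIntegral ?_ (by simp [hmin, hζ])
  exact ⟨_, monic_X_pow_sub_C 1 hσ.orderOf_pos.ne', by rw [← hmin, ← aeval_def, minpoly.aeval]⟩

theorem AlgEquiv.pow_apply_eq_pow_mul {K F : Type*} [CommSemiring K] [CommSemiring F]
    [Algebra K F] (σ : F ≃ₐ[K] F) {b c : F} (hc : σ c = c) (hb : σ b = c * b) (k : ℕ) :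
    (σ ^ k) b = c ^ k * b := by
  induction k with
  | zero => simp
  | succ k ih => rw [pow_succ', AlgEquiv.mul_apply, ih, map_mul, map_pow, hc, hb, pow_succ]; ring

theorem AlgEquiv.eq_one_of_apply_pow_eq_smul {K F : Type*} [Field K] [Field F] [Algebra K F]
    (σ : F ≃ₐ[K] F) {p : ℕ} (hσ : σ ^ p = 1) (hfix : ∀ c : F, c ^ (p ^ 2) = 1 → σ c = c)
    {ζ : K} (hζ : ζ ^ p = 1) {b : F} (hb : b ≠ 0) (hσb : σ (b ^ p) = ζ • b ^ p) : ζ = 1 := by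
  set c := σ b / b
  have hcb : σ b = c * b := (div_mul_cancel₀ _ hb).symm
  have hcp : c ^ p = algebraMap K F ζ := by
    rw [div_pow, ← map_pow, hσb, Algebra.smul_def, mul_div_cancel_right₀ _ (pow_ne_zero p hb)]
  have hc : σ c = c := hfix c (by rw [sq, pow_mul, hcp, ← map_pow, hζ, map_one])
  have hbζ : b = algebraMap K F ζ * b := by
    simpa [hσ, hcp] using σ.pow_apply_eq_pow_mul hc hcb p
  exact (algebraMap K F).injective (by simpa [hb] using (mul_eq_right₀ hb).mp hbζ.symm)

theorem IsPrimitiveRoot.mem_range_algebraMap_of_pow_eq_one {K F : Type*} [CommRing K]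
    [CommRing F] [IsDomain F] [Algebra K F] [FaithfulSMul K F] {m : ℕ} [NeZero m] {η : K}
    (hη : IsPrimitiveRoot η m) {c : F} (hc : c ^ m = 1) : c ∈ Set.range (algebraMap K F) := by
  have hηF := hη.map_of_injective (FaithfulSMul.algebraMap_injective K F)
  obtain ⟨i, -, rfl⟩ := hηF.eq_pow_of_pow_eq_one hc
  exact ⟨η ^ i, map_pow _ _ _⟩

theorem absolute_galois_group_torsion_free_general
    (L : Type*) [Field L]
    (hroots : ∀ n : ℕ, 0 < n → ∃ ζ : L, ζ ^ n = 1 ∧ ∀ m : ℕ, 0 < m → m < n → ζ ^ m ≠ 1)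
    (σ : AlgebraicClosure L ≃ₐ[L] AlgebraicClosure L)
    (n : ℕ) (hn : 1 ≤ n) (hσ : σ ^ n = 1) : σ = 1 := by
  have hfin : IsOfFinOrder σ := isOfFinOrder_iff_pow_eq_one.mpr ⟨n, hn, hσ⟩
  set p := orderOf σ
  have hp : 0 < p := hfin.orderOf_pos
  have hfix (c : AlgebraicClosure L) (hc : c ^ (p ^ 2) = 1) : σ c = c := by
    have : NeZero (p ^ 2) := ⟨by positivity⟩
    obtain ⟨η, hη, hηprim⟩ := hroots (p ^ 2) (by positivity)
    obtain ⟨a, rfl⟩ :=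
      (IsPrimitiveRoot.mk_of_lt η (by positivity) hη hηprim).mem_range_algebraMap_of_pow_eq_one hc
    exact σ.commutes a
  obtain ⟨ζ, hζ, hζprim⟩ := hroots p hp
  obtain ⟨v, hv⟩ := (σ.hasEigenvalue_of_pow_orderOf_eq_one hfin hζ).exists_hasEigenvector
  obtain ⟨b, rfl⟩ := IsAlgClosed.exists_pow_nat_eq v hp
  have hb : b ≠ 0 := fun h ↦ hv.2 (by simp [h, hp.ne'])
  have hζ1 : ζ = 1 :=
    σ.eq_one_of_apply_pow_eq_smul (pow_orderOf_eq_one σ) hfix hζ hb hv.apply_eq_smul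
  by_contra hσ1
  have hp1 : p ≠ 1 := mt orderOf_eq_one_iff.mp hσ1
  exact hζprim 1 one_pos (by omega) (by simp [hζ1])

/-- **Torsion-freeness of absolute Galois groups of fields containing all roots of unity**
(Kucharczyk–Scholze). If `L` is a field of characteristic `0` containing a primitive `n`-th
root of unity for every `n ≥ 1`, then every element of finite order of the absolute Galois
group `Gal(L̄/L)` is the identity. -/
theorem absolute_galois_group_torsion_free
    (L : Type*) [Field L] [CharZero L]
    (hroots : ∀ n : ℕ, 0 < n → ∃ ζ : L, ζ ^ n = 1 ∧ ∀ m : ℕ, 0 < m → m < n → ζ ^ m ≠ 1)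
    (σ : AlgebraicClosure L ≃ₐ[L] AlgebraicClosure L)
    (n : ℕ) (hn : 1 ≤ n) (hσ : σ ^ n = 1) : σ = 1 :=
  absolute_galois_group_torsion_free_general L hroots σ n hn hσ
end

section
/- Let C be a field equipped with a nonarchimedean (ultrametric) multiplicative norm extending the p-adic absolute value on ℚ_p, and assume C is complete. For z ∈ C with ‖z‖ < 1, one has log(1+z) = 0 if and only if 1+z is a p-power root of unity, i.e. (1+z)^{p^r} = 1 for some integer r ≥ 0. In particular, for every p-power root of unity ζ ∈ C one has ‖ζ − 1‖ < 1 and log(ζ) = 0. -/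
/-- `log1p z` is the sum of the series `Σ_{n ≥ 1} (-1)^(n-1) z^n / n`, i.e. `log (1 + z)`. -/
noncomputable def log1p {C : Type*} [NormedField C] (z : C) : C :=
  ∑' n : ℕ, (-1) ^ n * z ^ (n + 1) / ((n : C) + 1)

/-!
Binomial expansion and dominated convergence give
`log (1 + z) = lim_r ((1 + z) ^ p ^ r - 1) / p ^ r`, because `(p ^ r - 1).choose n → (-1) ^ n`
as `p ^ r → 0`. Hence `log ((1 + z) ^ p ^ N) = p ^ N * log (1 + z)` and `(1 + z) ^ p ^ N → 1`.
On the disc `‖w‖ < p⁻¹` the first term of the series strictly dominates the others, so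
`‖log (1 + w)‖ = ‖w‖`; applied to `1 + w = (1 + z) ^ p ^ N` with `N` large, `log (1 + z) = 0`
forces `(1 + z) ^ p ^ N = 1`. Conversely, if `(1 + z) ^ p ^ r = 1` with `‖z‖ ≤ 1`, then `p` divides
all the inner binomial coefficients, so `‖z‖ ^ p ^ r ≤ p⁻¹ < 1`.
-/

open Filter Finset Topology

namespace Ring

lemma continuous_choose {K : Type*} [NormedField K] [CharZero K] (n : ℕ) :
    Continuous fun x : K => choose x n := by
  have h (x : K) :
      choose x n = (n.factorial : K)⁻¹ * Polynomial.aeval x (descPochhammer ℤ n) := by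
    rw [Polynomial.aeval_eq_smeval, descPochhammer_eq_factorial_smul_choose, nsmul_eq_mul,
      inv_mul_cancel_left₀ (Nat.cast_ne_zero.mpr n.factorial_ne_zero)]
  simp only [h]
  fun_prop

lemma choose_neg_one {K : Type*} [Field K] [CharZero K] (n : ℕ) :
    choose (-1 : K) n = (-1) ^ n := by
  simp [choose_neg, choose_natCast, Units.smul_def]

end Ring

lemma tendsto_natCast_choose {α K : Type*} [NormedField K] [CharZero K] {l : Filter α}
    {m : α → ℕ} {x : K} (hm : Tendsto (fun a => (m a : K)) l (𝓝 x)) (n : ℕ) :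
    Tendsto (fun a => ((m a).choose n : K)) l (𝓝 (Ring.choose x n)) := by
  simpa only [Function.comp_def, Ring.choose_natCast] using
    ((Ring.continuous_choose n).tendsto x).comp hm

lemma add_one_pow_sub_one_eq_sum {R : Type*} [CommRing R] (z : R) (q : ℕ) :
    (1 + z) ^ q - 1 = ∑ n ∈ range q, z ^ (n + 1) * (q.choose (n + 1) : R) := by
  rw [add_comm, add_pow, sum_range_succ']
  simp

lemma norm_add_one_pow_sub_one_le {K : Type*} [NormedField K] [IsUltrametricDist K] {z : K}
    (hz : ‖z‖ ≤ 1) (q : ℕ) : ‖(1 + z) ^ q - 1‖ ≤ ‖z‖ := by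
  have h1z : ‖1 + z‖ ≤ 1 :=
    (IsUltrametricDist.norm_add_le_max 1 z).trans (by simp [hz])
  rw [← geom_sum_mul, add_sub_cancel_left, norm_mul]
  refine mul_le_of_le_one_left (norm_nonneg z) ?_
  refine IsUltrametricDist.norm_sum_le_of_forall_le_of_nonneg zero_le_one fun i _ => ?_
  rw [norm_pow]
  exact pow_le_one₀ (norm_nonneg _) h1z

lemma summable_succ_mul_pow {x : ℝ} (hx0 : 0 ≤ x) (hx : x < 1) :
    Summable fun n : ℕ => ((n : ℝ) + 1) * x ^ (n + 1) := by
  have h := summable_pow_mul_geometric_of_norm_lt_one (R := ℝ) 1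
    (by rwa [Real.norm_of_nonneg hx0])
  refine ((summable_nat_add_iff 1).mpr h).congr fun n => ?_
  push_cast
  ring

lemma Padic.norm_natCast_inv_le {p : ℕ} [Fact p.Prime] {n : ℕ} (hn : n ≠ 0) :
    ‖(n : ℚ_[p])‖⁻¹ ≤ n := by
  rw [Padic.norm_eq_zpow_neg_valuation (by exact_mod_cast hn), Padic.valuation_natCast,
    ← zpow_neg, neg_neg, zpow_natCast]
  exact_mod_cast Nat.le_of_dvd (Nat.pos_of_ne_zero hn) pow_padicValNat_dvd

section Log1p

variable {C : Type*} [NormedField C]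

lemma log1p_zero : log1p (0 : C) = 0 := by
  simp [log1p]

lemma norm_natCast_eq_padic (p : ℕ) [Fact p.Prime] [NormedAlgebra ℚ_[p] C] (n : ℕ) :
    ‖(n : C)‖ = ‖(n : ℚ_[p])‖ := by
  rw [← map_natCast (algebraMap ℚ_[p] C), norm_algebraMap']

lemma norm_natCast_inv_le (p : ℕ) [Fact p.Prime] [NormedAlgebra ℚ_[p] C] {n : ℕ}
    (hn : n ≠ 0) : ‖(n : C)‖⁻¹ ≤ n := by
  rw [norm_natCast_eq_padic p]
  exact Padic.norm_natCast_inv_le hn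

lemma norm_mul_pow_div_succ_le (p : ℕ) [Fact p.Prime] [NormedAlgebra ℚ_[p] C] {c : C}
    (hc : ‖c‖ ≤ 1) (z : C) (n : ℕ) :
    ‖c * z ^ (n + 1) / ((n : C) + 1)‖ ≤ ((n : ℝ) + 1) * ‖z‖ ^ (n + 1) := by
  have hn : ‖((n : C) + 1)‖⁻¹ ≤ (n : ℝ) + 1 := by
    exact_mod_cast norm_natCast_inv_le p (C := C) n.succ_ne_zero
  rw [norm_div, norm_mul, norm_pow, div_eq_mul_inv, mul_comm]
  calc ‖((n : C) + 1)‖⁻¹ * (‖c‖ * ‖z‖ ^ (n + 1))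
      ≤ ((n : ℝ) + 1) * (1 * ‖z‖ ^ (n + 1)) := by gcongr
    _ = ((n : ℝ) + 1) * ‖z‖ ^ (n + 1) := by rw [one_mul]

lemma summable_log1p_series [CompleteSpace C] (p : ℕ) [Fact p.Prime] [NormedAlgebra ℚ_[p] C]
    {z : C} (hz : ‖z‖ < 1) : Summable fun n : ℕ => (-1) ^ n * z ^ (n + 1) / ((n : C) + 1) :=
  .of_norm_bounded (summable_succ_mul_pow (norm_nonneg z) hz)
    fun n => norm_mul_pow_div_succ_le p (by simp) z n

lemma add_one_pow_sub_one_div_eq_tsum [CharZero C] (z : C) {q : ℕ} (hq : q ≠ 0) :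
    ((1 + z) ^ q - 1) / q =
      ∑' n : ℕ, ((q - 1).choose n : C) * z ^ (n + 1) / ((n : C) + 1) := by
  obtain ⟨m, rfl⟩ := Nat.exists_eq_add_one.mpr (Nat.pos_of_ne_zero hq)
  rw [tsum_eq_sum (s := range (m + 1)) fun n hn => by
      rw [Nat.choose_eq_zero_of_lt (by simpa using hn)]; simp,
    add_one_pow_sub_one_eq_sum, sum_div]
  refine sum_congr rfl fun n _ => ?_
  have hchoose : ((m + 1 : ℕ) : C) * (m.choose n : C) =
      ((m + 1).choose (n + 1) : C) * ((n : C) + 1) := by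
    exact_mod_cast Nat.add_one_mul_choose_eq m n
  rw [Nat.add_sub_cancel,
    div_eq_div_iff (Nat.cast_ne_zero.mpr m.succ_ne_zero) (Nat.cast_add_one_ne_zero n)]
  linear_combination z ^ (n + 1) * hchoose.symm

variable (p : ℕ) [hp : Fact p.Prime] [NormedAlgebra ℚ_[p] C]

lemma norm_natCast_prime : ‖(p : C)‖ = (p : ℝ)⁻¹ := by
  rw [norm_natCast_eq_padic p, Padic.norm_p]

lemma norm_natCast_le_of_dvd [IsUltrametricDist C] {n : ℕ} (h : p ∣ n) :
    ‖(n : C)‖ ≤ (p : ℝ)⁻¹ := by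
  obtain ⟨m, rfl⟩ := h
  rw [Nat.cast_mul, norm_mul, norm_natCast_prime p]
  exact mul_le_of_le_one_right (by positivity) (IsUltrametricDist.norm_natCast_le_one C m)

lemma tendsto_natCast_prime_pow : Tendsto (fun r : ℕ => (p : C) ^ r) atTop (𝓝 0) := by
  refine tendsto_pow_atTop_nhds_zero_of_norm_lt_one ?_
  rw [norm_natCast_prime p]
  exact inv_lt_one_of_one_lt₀ (mod_cast hp.out.one_lt)

theorem tendsto_add_one_pow_prime_pow_sub_one_div_log1p [CompleteSpace C] [IsUltrametricDist C]
    [CharZero C] {z : C} (hz : ‖z‖ < 1) :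
    Tendsto (fun r : ℕ => ((1 + z) ^ p ^ r - 1) / (p : C) ^ r) atTop (𝓝 (log1p z)) := by
  have hq (r : ℕ) : p ^ r ≠ 0 := pow_ne_zero r hp.out.ne_zero
  have hchoose (n : ℕ) : Tendsto (fun r => ((p ^ r - 1).choose n : C)) atTop (𝓝 ((-1) ^ n)) := by
    rw [← Ring.choose_neg_one]
    refine tendsto_natCast_choose ?_ n
    simpa [Nat.cast_sub (Nat.one_le_iff_ne_zero.mpr (hq _))] using
      (tendsto_natCast_prime_pow p (C := C)).sub_const 1
  refine (tendsto_tsum_of_dominated_convergence (summable_succ_mul_pow (norm_nonneg z) hz)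
    (fun n => ((hchoose n).mul_const (z ^ (n + 1))).div_const ((n : C) + 1))
    (.of_forall fun r n => norm_mul_pow_div_succ_le p
      (IsUltrametricDist.norm_natCast_le_one C _) z n)).congr fun r => ?_
  rw [← add_one_pow_sub_one_div_eq_tsum z (hq r), Nat.cast_pow]

lemma tendsto_add_one_pow_prime_pow_sub_one [CompleteSpace C] [IsUltrametricDist C] [CharZero C]
    {z : C} (hz : ‖z‖ < 1) : Tendsto (fun r : ℕ => (1 + z) ^ p ^ r - 1) atTop (𝓝 0) := by
  have h :=
    (tendsto_natCast_prime_pow p).mul (tendsto_add_one_pow_prime_pow_sub_one_div_log1p p hz)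
  rw [zero_mul] at h
  exact h.congr fun r => mul_div_cancel₀ _ (pow_ne_zero r (Nat.cast_ne_zero.mpr hp.out.ne_zero))

lemma log1p_add_one_pow_prime_pow_sub_one [CompleteSpace C] [IsUltrametricDist C] [CharZero C]
    {z : C} (hz : ‖z‖ < 1) (N : ℕ) : log1p ((1 + z) ^ p ^ N - 1) = (p : C) ^ N * log1p z := by
  have hw : ‖(1 + z) ^ p ^ N - 1‖ < 1 := (norm_add_one_pow_sub_one_le hz.le _).trans_lt hz
  refine tendsto_nhds_unique (tendsto_add_one_pow_prime_pow_sub_one_div_log1p p hw) ?_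
  refine (((tendsto_add_one_pow_prime_pow_sub_one_div_log1p p hz).comp
    (tendsto_add_atTop_nat N)).const_mul ((p : C) ^ N)).congr fun s => ?_
  have hp0 : (p : C) ≠ 0 := Nat.cast_ne_zero.mpr hp.out.ne_zero
  rw [Function.comp_apply, add_sub_cancel, ← pow_mul, ← pow_add, add_comm N s]
  field_simp
  ring

lemma log1p_eq_zero_of_pow_eq_one [CompleteSpace C] [IsUltrametricDist C] [CharZero C]
    {z : C} (hz : ‖z‖ < 1) {r : ℕ} (h : (1 + z) ^ p ^ r = 1) : log1p z = 0 := by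
  have hlog := log1p_add_one_pow_prime_pow_sub_one p hz r
  rw [h, sub_self, log1p_zero, eq_comm, mul_eq_zero] at hlog
  exact hlog.resolve_left (pow_ne_zero r (Nat.cast_ne_zero.mpr hp.out.ne_zero))

lemma norm_log1p_eq_norm [CompleteSpace C] [IsUltrametricDist C] {w : C}
    (hw : ‖w‖ < (p : ℝ)⁻¹) : ‖log1p w‖ = ‖w‖ := by
  rcases eq_or_ne w 0 with rfl | hw0
  · rw [log1p_zero]
  have hp1 : 1 < p := hp.out.one_lt
  have hw1 : ‖w‖ < 1 := hw.trans (inv_lt_one_of_one_lt₀ (mod_cast hp1))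
  have hpw : (p : ℝ) * ‖w‖ < 1 := (lt_inv_mul_iff₀ (by positivity)).mp (by rwa [mul_one])
  set tail := ∑' n : ℕ, (-1) ^ (n + 1) * w ^ (n + 1 + 1) / ((n : C) + 1 + 1)
  have hsplit : log1p w = w + tail := by
    rw [log1p, (summable_log1p_series p hw1).tsum_eq_zero_add]
    simp [tail]
  have htail : ‖tail‖ ≤ ‖w‖ * (p * ‖w‖) := by
    refine IsUltrametricDist.norm_tsum_le_of_forall_le_of_nonneg (by positivity) fun n => ?_
    calc _ ≤ ((n : ℝ) + 1 + 1) * ‖w‖ ^ (n + 1 + 1) := by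
          exact_mod_cast norm_mul_pow_div_succ_le p (c := (-1 : C) ^ (n + 1)) (by simp) w (n + 1)
      _ ≤ (p : ℝ) ^ (n + 1) * ‖w‖ ^ (n + 1 + 1) := by
          gcongr; exact_mod_cast Nat.lt_pow_self hp1
      _ = ‖w‖ * (p * ‖w‖) ^ (n + 1) := by ring
      _ ≤ ‖w‖ * (p * ‖w‖) := by
          gcongr; exact pow_le_of_le_one (by positivity) hpw.le n.succ_ne_zero
  have hlt : ‖tail‖ < ‖w‖ :=
    htail.trans_lt (mul_lt_of_lt_one_right (norm_pos_iff.mpr hw0) hpw)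
  rw [hsplit, IsUltrametricDist.norm_add_eq_max_of_norm_ne_norm hlt.ne', max_eq_left hlt.le]

lemma exists_pow_eq_one_of_log1p_eq_zero [CompleteSpace C] [IsUltrametricDist C] [CharZero C]
    {z : C} (hz : ‖z‖ < 1) (h : log1p z = 0) : ∃ r : ℕ, (1 + z) ^ p ^ r = 1 := by
  obtain ⟨N, hN⟩ := ((tendsto_zero_iff_norm_tendsto_zero.mp
    (tendsto_add_one_pow_prime_pow_sub_one p hz)).eventually_lt_const
      (inv_pos.mpr (Nat.cast_pos.mpr hp.out.pos))).exists
  have hnorm := norm_log1p_eq_norm p hN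
  rw [log1p_add_one_pow_prime_pow_sub_one p hz, h, mul_zero, norm_zero, eq_comm, norm_eq_zero,
    sub_eq_zero] at hnorm
  exact ⟨N, hnorm⟩

lemma norm_add_one_pow_prime_pow_sub_one_sub_pow_le [IsUltrametricDist C] {z : C}
    (hz : ‖z‖ ≤ 1) (r : ℕ) : ‖(1 + z) ^ p ^ r - 1 - z ^ p ^ r‖ ≤ (p : ℝ)⁻¹ := by
  obtain ⟨m, hm⟩ := Nat.exists_eq_add_one.mpr (pow_pos hp.out.pos r)
  rw [add_one_pow_sub_one_eq_sum, hm, sum_range_succ, Nat.choose_self, Nat.cast_one, mul_one,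
    add_sub_cancel_right]
  refine IsUltrametricDist.norm_sum_le_of_forall_le_of_nonneg (by positivity) fun n hn => ?_
  have hdvd : p ∣ (m + 1).choose (n + 1) :=
    hm ▸ hp.out.dvd_choose_pow n.succ_ne_zero (by rw [hm]; simp at hn; omega)
  rw [norm_mul, norm_pow]
  calc _ ≤ 1 * (p : ℝ)⁻¹ :=
        mul_le_mul (pow_le_one₀ (norm_nonneg z) hz) (norm_natCast_le_of_dvd p hdvd)
          (norm_nonneg _) zero_le_one
    _ = (p : ℝ)⁻¹ := one_mul _

lemma norm_sub_one_lt_one_of_pow_eq_one [IsUltrametricDist C] {ζ : C} {r : ℕ}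
    (h : ζ ^ p ^ r = 1) : ‖ζ - 1‖ < 1 := by
  have hq : p ^ r ≠ 0 := pow_ne_zero r hp.out.ne_zero
  have hζ : ‖ζ‖ = 1 := by
    rw [← pow_eq_one_iff_of_nonneg (norm_nonneg ζ) hq, ← norm_pow, h, norm_one]
  have hz : ‖ζ - 1‖ ≤ 1 := by
    simpa [sub_eq_add_neg, hζ] using IsUltrametricDist.norm_add_le_max ζ (-1)
  have key := norm_add_one_pow_prime_pow_sub_one_sub_pow_le p hz r
  rw [add_sub_cancel, h, sub_self, zero_sub, norm_neg, norm_pow] at key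
  rw [← pow_lt_one_iff_of_nonneg (norm_nonneg _) hq]
  exact key.trans_lt (inv_lt_one_of_one_lt₀ (mod_cast hp.out.one_lt))

end Log1p

/-- **The kernel of the `p`-adic logarithm.** Let `C` be a complete field with a
nonarchimedean multiplicative norm extending the `p`-adic absolute value on `ℚ_p`.
For `‖z‖ < 1`, one has `log (1+z) = 0` iff `1 + z` is a `p`-power root of unity.
In particular, every `p`-power root of unity `ζ ∈ C` satisfies `‖ζ - 1‖ < 1` and
`log ζ = 0`. -/
theorem padic_log_eq_zero_iff_pow_prime_root_of_unity (p : ℕ) [Fact p.Prime]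
    (C : Type*) [NormedField C] [CompleteSpace C] [IsUltrametricDist C]
    [Algebra ℚ_[p] C] (hext : ∀ x : ℚ_[p], ‖algebraMap ℚ_[p] C x‖ = ‖x‖) :
    (∀ z : C, ‖z‖ < 1 →
      (log1p z = 0 ↔ ∃ r : ℕ, (1 + z) ^ p ^ r = 1)) ∧
    (∀ ζ : C, (∃ r : ℕ, ζ ^ p ^ r = 1) → ‖ζ - 1‖ < 1 ∧ log1p (ζ - 1) = 0) := by
  let _ : NormedAlgebra ℚ_[p] C :=
    { ‹Algebra ℚ_[p] C› with norm_smul_le := fun c x => by rw [Algebra.smul_def, norm_mul, hext] }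
  have : CharZero C := charZero_of_injective_algebraMap (algebraMap ℚ_[p] C).injective
  have log1p_eq_zero_iff (z : C) (hz : ‖z‖ < 1) :
      log1p z = 0 ↔ ∃ r : ℕ, (1 + z) ^ p ^ r = 1 :=
    ⟨exists_pow_eq_one_of_log1p_eq_zero p hz,
      fun ⟨_, hr⟩ => log1p_eq_zero_of_pow_eq_one p hz hr⟩
  refine ⟨log1p_eq_zero_iff, fun ζ ⟨r, hr⟩ => ?_⟩
  have hζ := norm_sub_one_lt_one_of_pow_eq_one p hr
  exact ⟨hζ, (log1p_eq_zero_iff _ hζ).mpr ⟨r, by rwa [add_sub_cancel]⟩⟩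
end
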